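/- For k, ℓ ∈ N and a ∈ k (char k = p > 2), the algebra G(k,ℓ,a) = k⟨x,y⟩/(yx − xy + (1/2)x², y^{p^k} − a x^{p^k}, x^{p^ℓ}) has linear basis {x^i y^j : 0 ≤ i ≤ p^ℓ − 1, 0 ≤ j ≤ p^k − 1}, hence dimension p^{k+ℓ}. -/

import Mathlib

/-!
The relation `y x = x y - x² / 2` moves `y` past powers of `x`, so the monomials `x ^ i * y ^ j`
with `i < p ^ ℓ`, `j < p ^ k` span `G(k,ℓ,a)`. They are independent because the would-be left
regular representation on the vector space with basis `e i j` does satisfy the defining relations,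
and sends `x ^ i * y ^ j` to an operator mapping `e 0 0` to `e i j`. The delicate relation is
`y ^ (p ^ k) = a • x ^ (p ^ k)`: in characteristic `p` both sides commute with `x` and `y`, so it
suffices to check it on the cyclic vector `e 0 0`.
-/

/-- Defining relations of
`G(k,ℓ,a) = k⟨x,y⟩/(yx - xy + (1/2)x², y^{p^k} - a x^{p^k}, x^{p^ℓ})`,
with `x = ι 0`, `y = ι 1`. -/
inductive GRel (K : Type*) [Field K] (p k ℓ : ℕ) (a : K) :
    FreeAlgebra K (Fin 2) → FreeAlgebra K (Fin 2) → Prop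
  | comm : GRel K p k ℓ a (FreeAlgebra.ι K (1 : Fin 2) * FreeAlgebra.ι K (0 : Fin 2))
      (FreeAlgebra.ι K (0 : Fin 2) * FreeAlgebra.ι K (1 : Fin 2)
        - (1/2 : K) • (FreeAlgebra.ι K (0 : Fin 2)) ^ 2)
  | ypk : GRel K p k ℓ a ((FreeAlgebra.ι K (1 : Fin 2)) ^ p ^ k)
      (a • (FreeAlgebra.ι K (0 : Fin 2)) ^ p ^ k)
  | xpl : GRel K p k ℓ a ((FreeAlgebra.ι K (0 : Fin 2)) ^ p ^ ℓ) 0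

open scoped Nat
open Submodule (span)

section JordanRelation

variable {K R : Type*} [Field K] [Ring R] [Algebra K R] {X Y : R}

theorem mul_pow_eq_of_mul_eq (hYX : Y * X = X * Y - (1 / 2 : K) • X ^ 2) (j : ℕ) :
    Y * X ^ j = X ^ j * Y - ((j : K) / 2) • X ^ (j + 1) := by
  induction j with
  | zero => simp
  | succ j ih =>
    rw [pow_succ, ← mul_assoc, ih, sub_mul, smul_mul_assoc, ← pow_succ, mul_assoc, hYX, mul_sub,
      mul_smul_comm, ← mul_assoc, ← pow_succ, ← pow_add, sub_sub, ← add_smul]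
    congr 2
    push_cast
    ring

theorem mulLeft_sub_mulRight_pow_apply_of_mul_eq
    (hYX : Y * X = X * Y - (1 / 2 : K) • X ^ 2) (n : ℕ) :
    ((LinearMap.mulLeft K Y - LinearMap.mulRight K Y) ^ n) X
      = ((-2⁻¹ : K) ^ n * n !) • X ^ (n + 1) := by
  induction n with
  | zero => simp
  | succ n ih =>
    rw [pow_succ', Module.End.mul_apply, ih, map_smul, LinearMap.sub_apply,
      LinearMap.mulLeft_apply, LinearMap.mulRight_apply, mul_pow_eq_of_mul_eq hYX,
      sub_sub_cancel_left, smul_neg, ← neg_smul, smul_smul]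
    congr 1
    push_cast [Nat.factorial_succ]
    ring

/-- In characteristic `p`, `ad Y ^ (p ^ k) = ad (Y ^ (p ^ k))`, while `ad Y ^ n X` carries the
factor `n !`. -/
theorem commute_pow_prime_pow_of_mul_eq (p : ℕ) [Fact p.Prime] [CharP K p]
    (hYX : Y * X = X * Y - (1 / 2 : K) • X ^ 2) {k : ℕ} (hk : k ≠ 0) :
    Commute X (Y ^ p ^ k) := by
  rcases subsingleton_or_nontrivial R with _ | _
  · exact Subsingleton.elim _ _
  have : CharP (Module.End K R) p := charP_of_injective_algebraMap' K p
  have hfact : ((p ^ k) ! : K) = 0 :=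
    (CharP.cast_eq_zero_iff K p _).2 <|
      (dvd_pow_self p hk).trans (Nat.dvd_factorial (pow_pos (Fact.out : p.Prime).pos k) le_rfl)
  have hD := mulLeft_sub_mulRight_pow_apply_of_mul_eq hYX (p ^ k)
  rw [sub_pow_expChar_pow_of_commute p k (LinearMap.commute_mulLeft_right Y Y),
    LinearMap.pow_mulLeft, LinearMap.pow_mulRight, hfact, mul_zero, zero_smul,
    LinearMap.sub_apply, LinearMap.mulLeft_apply, LinearMap.mulRight_apply, sub_eq_zero] at hD
  exact hD.symm

theorem commute_pow_of_mul_eq_of_cast_eq_zero (hYX : Y * X = X * Y - (1 / 2 : K) • X ^ 2)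
    {n : ℕ} (hn : (n : K) = 0) : Commute (X ^ n) Y := by
  rw [Commute, SemiconjBy, mul_pow_eq_of_mul_eq hYX, hn, zero_div, zero_smul, sub_zero]

end JordanRelation

theorem span_range_eq_top_of_mul_mem {K A ι : Type*} [CommSemiring K] [Semiring A] [Algebra K A]
    {s : Set A} (hs : Algebra.adjoin K s = ⊤) {v : ι → A}
    (h1 : 1 ∈ span K (Set.range v))
    (hmul : ∀ g ∈ s, ∀ i, g * v i ∈ span K (Set.range v)) :
    span K (Set.range v) = ⊤ := by
  set S := span K (Set.range v)
  have hstable : ∀ r : A, ∀ u ∈ S, r * u ∈ S := by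
    intro r
    induction (hs ▸ Algebra.mem_top : r ∈ Algebra.adjoin K s)
      using Algebra.adjoin_induction with
    | mem g hg =>
      intro u hu
      have : S ≤ S.comap (LinearMap.mulLeft K g) :=
        Submodule.span_le.2 <| Set.range_subset_iff.2 (hmul g hg)
      exact this hu
    | algebraMap c => exact fun u hu => by rw [← Algebra.smul_def]; exact S.smul_mem c hu
    | add r r' _ _ hr hr' =>
      exact fun u hu => by rw [add_mul]; exact S.add_mem (hr u hu) (hr' u hu)
    | mul r r' _ _ hr hr' => exact fun u hu => by rw [mul_assoc]; exact hr _ (hr' u hu)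
  exact eq_top_iff.2 fun r _ => mul_one r ▸ hstable r 1 h1

theorem span_pow_mul_pow_eq_top {K A : Type*} [Field K] [Ring A] [Algebra K A] {X Y : A}
    {N M : ℕ} (hM : 0 < M) (a : K) (hgen : Algebra.adjoin K {X, Y} = ⊤)
    (hYX : Y * X = X * Y - (1 / 2 : K) • X ^ 2) (hY : Y ^ M = a • X ^ M) (hX : X ^ N = 0) :
    span K (Set.range fun q : Fin N × Fin M => X ^ (q.1 : ℕ) * Y ^ (q.2 : ℕ)) = ⊤ := by
  set S := span K (Set.range fun q : Fin N × Fin M => X ^ (q.1 : ℕ) * Y ^ (q.2 : ℕ))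
  have hmem : ∀ i j, j < M → X ^ i * Y ^ j ∈ S := by
    intro i j hj
    by_cases hi : i < N
    · exact Submodule.subset_span ⟨(⟨i, hi⟩, ⟨j, hj⟩), rfl⟩
    · rw [← Nat.add_sub_cancel' (not_lt.1 hi), pow_add, hX, zero_mul, zero_mul]
      exact S.zero_mem
  refine span_range_eq_top_of_mul_mem hgen (by simpa using hmem 0 0 hM) ?_
  rintro g (rfl | rfl) ⟨⟨i, -⟩, ⟨j, hj⟩⟩
  · simp only
    rw [← mul_assoc, ← pow_succ']
    exact hmem _ _ hj
  · simp only
    rw [← mul_assoc, mul_pow_eq_of_mul_eq hYX, sub_mul, smul_mul_assoc, mul_assoc, ← pow_succ']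
    refine S.sub_mem ?_ (S.smul_mem _ (hmem _ _ hj))
    rcases (show j + 1 ≤ M from hj).lt_or_eq with hj' | hj'
    · exact hmem _ _ hj'
    · rw [hj', hY, mul_smul_comm, ← pow_add]
      simpa using S.smul_mem a (hmem (i + M) 0 hM)

namespace GModel

variable (K : Type*) [Field K] (N M : ℕ) (a : K)

/-- Out of range indices give `0`, which encodes `x ^ N = 0`. -/
noncomputable def e (i j : ℕ) : (Fin N × Fin M) →₀ K :=
  if h : i < N ∧ j < M then Finsupp.single (⟨i, h.1⟩, ⟨j, h.2⟩) 1 else 0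

noncomputable def opX : Module.End K ((Fin N × Fin M) →₀ K) :=
  Finsupp.linearCombination K fun q => e K N M (q.1 + 1) q.2

/-- Left multiplication by `y` on `G(k,ℓ,a)` in the expected basis `e i j = x ^ i * y ^ j`:
`y * x ^ i * y ^ j = x ^ i * y ^ (j + 1) - (i / 2) • x ^ (i + 1) * y ^ j`, and
`y ^ M = a • x ^ M` when `j + 1 = M`. -/
noncomputable def opY : Module.End K ((Fin N × Fin M) →₀ K) :=
  Finsupp.linearCombination K fun q =>
    (if (q.2 : ℕ) + 1 < M then e K N M q.1 (q.2 + 1) else a • e K N M (q.1 + M) 0)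
      - (((q.1 : ℕ) : K) / 2) • e K N M (q.1 + 1) q.2

variable {N M}

theorem e_of_lt {i j : ℕ} (hi : i < N) (hj : j < M) :
    e K N M i j = Finsupp.single (⟨i, hi⟩, ⟨j, hj⟩) 1 := by
  rw [e, dif_pos ⟨hi, hj⟩]

theorem e_of_le {i j : ℕ} (h : N ≤ i ∨ M ≤ j) : e K N M i j = 0 := by
  rw [e, dif_neg]
  omega

theorem single_one_eq_e (q : Fin N × Fin M) : Finsupp.single q (1 : K) = e K N M q.1 q.2 :=
  (e_of_lt K q.1.isLt q.2.isLt).symm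

theorem opX_e (i j : ℕ) : opX K N M (e K N M i j) = e K N M (i + 1) j := by
  by_cases h : i < N ∧ j < M
  · rw [e_of_lt K h.1 h.2, opX, Finsupp.linearCombination_single, one_smul]
  · rw [e_of_le K (by omega), map_zero, e_of_le K (by omega)]

theorem opX_pow_e (m i j : ℕ) : (opX K N M ^ m) (e K N M i j) = e K N M (i + m) j := by
  induction m with
  | zero => simp
  | succ m ih => rw [pow_succ', Module.End.mul_apply, ih, opX_e, add_assoc]

theorem opY_e_of_lt {i j : ℕ} (hj : j + 1 < M) :
    opY K N M a (e K N M i j) = e K N M i (j + 1) - ((i : K) / 2) • e K N M (i + 1) j := by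
  by_cases hi : i < N
  · rw [e_of_lt K hi (by omega), opY, Finsupp.linearCombination_single, one_smul, if_pos hj]
  · rw [e_of_le K (by omega), map_zero, e_of_le K (Or.inl (by omega)),
      e_of_le K (Or.inl (by omega)), smul_zero, sub_zero]

theorem opY_e_last (hM : 0 < M) (i : ℕ) :
    opY K N M a (e K N M i (M - 1))
      = a • e K N M (i + M) 0 - ((i : K) / 2) • e K N M (i + 1) (M - 1) := by
  by_cases hi : i < N
  · rw [e_of_lt K hi (by omega), opY, Finsupp.linearCombination_single, one_smul,
      if_neg (by dsimp only; omega)]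
  · rw [e_of_le K (by omega), map_zero, e_of_le K (Or.inl (by omega)),
      e_of_le K (Or.inl (by omega)), smul_zero, smul_zero, sub_zero]

theorem opY_pow_e_zero {j : ℕ} (hj : j < M) :
    (opY K N M a ^ j) (e K N M 0 0) = e K N M 0 j := by
  induction j with
  | zero => simp
  | succ j ih =>
    rw [pow_succ', Module.End.mul_apply, ih (by omega), opY_e_of_lt K a hj, Nat.cast_zero,
      zero_div, zero_smul, sub_zero]

theorem opX_pow_mul_opY_pow_e_zero (i : ℕ) {j : ℕ} (hj : j < M) :
    (opX K N M ^ i * opY K N M a ^ j) (e K N M 0 0) = e K N M i j := by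
  rw [Module.End.mul_apply, opY_pow_e_zero K a hj, opX_pow_e, zero_add]

theorem ext_e {f g : Module.End K ((Fin N × Fin M) →₀ K)}
    (h : ∀ (i : Fin N) (j : Fin M), f (e K N M i j) = g (e K N M i j)) : f = g :=
  Finsupp.basisSingleOne.ext fun q => by
    simpa only [Finsupp.coe_basisSingleOne, single_one_eq_e] using h q.1 q.2

theorem opY_mul_opX :
    opY K N M a * opX K N M = opX K N M * opY K N M a - (1 / 2 : K) • opX K N M ^ 2 := by
  refine ext_e K fun i ⟨j, hj⟩ => ?_
  have hM : 0 < M := by omega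
  rw [LinearMap.sub_apply, LinearMap.smul_apply, Module.End.mul_apply, Module.End.mul_apply,
    opX_e, opX_pow_e]
  have hi : (((i : ℕ) + 1 : ℕ) : K) / 2 = (i : K) / 2 + 1 / 2 := by push_cast; ring
  rcases (show j + 1 ≤ M from hj).lt_or_eq with hj' | hj'
  · rw [opY_e_of_lt K a hj', opY_e_of_lt K a hj', map_sub, map_smul, opX_e, opX_e, hi, add_smul]
    abel
  · obtain rfl : j = M - 1 := by omega
    rw [opY_e_last K a hM, opY_e_last K a hM, map_sub, map_smul, map_smul, opX_e, opX_e, hi,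
      add_smul, show (i : ℕ) + 1 + M = i + M + 1 by omega]
    abel

theorem opX_pow_eq_zero : opX K N M ^ N = 0 :=
  ext_e K fun i j => by
    rw [opX_pow_e, e_of_le K (Or.inl (by omega)), LinearMap.zero_apply]

theorem opY_pow_eq (p : ℕ) [Fact p.Prime] [CharP K p] {k : ℕ} (hk : k ≠ 0) :
    opY K N (p ^ k) a ^ p ^ k = a • opX K N (p ^ k) ^ p ^ k := by
  set X := opX K N (p ^ k)
  set Y := opY K N (p ^ k) a
  have hYX : Y * X = X * Y - (1 / 2 : K) • X ^ 2 := opY_mul_opX K a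
  have hpk : 0 < p ^ k := pow_pos (Fact.out : p.Prime).pos k
  have hcast : ((p ^ k : ℕ) : K) = 0 := by
    rw [CharP.cast_eq_zero_iff K p]
    exact dvd_pow_self p hk
  have hYpow := commute_pow_prime_pow_of_mul_eq
    (R := Module.End K (Fin N × Fin (p ^ k) →₀ K)) p hYX hk
  have hXpow := commute_pow_of_mul_eq_of_cast_eq_zero
    (R := Module.End K (Fin N × Fin (p ^ k) →₀ K)) hYX hcast
  have h00 : (Y ^ p ^ k) (e K N (p ^ k) 0 0) = (a • X ^ p ^ k) (e K N (p ^ k) 0 0) :=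
    calc (Y ^ p ^ k) (e K N (p ^ k) 0 0) = Y ((Y ^ (p ^ k - 1)) (e K N (p ^ k) 0 0)) := by
          rw [← Module.End.mul_apply, ← pow_succ', Nat.sub_add_cancel hpk]
      _ = a • e K N (p ^ k) (p ^ k) 0 := by
          rw [opY_pow_e_zero K a (Nat.sub_lt hpk one_pos), opY_e_last K a hpk, Nat.cast_zero,
            zero_div, zero_smul, sub_zero, zero_add]
      _ = (a • X ^ p ^ k) (e K N (p ^ k) 0 0) := by
          rw [LinearMap.smul_apply, opX_pow_e, zero_add]
  refine ext_e K fun i j => ?_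
  have hYT : Commute (Y ^ p ^ k) (X ^ (i : ℕ) * Y ^ (j : ℕ)) :=
    (hYpow.symm.pow_right _).mul_right (Commute.pow_pow_self Y _ _)
  have hXT : Commute (a • X ^ p ^ k) (X ^ (i : ℕ) * Y ^ (j : ℕ)) :=
    ((Commute.pow_pow_self X _ _).mul_right (hXpow.pow_right _)).smul_left a
  rw [← opX_pow_mul_opY_pow_e_zero K a _ j.isLt, ← Module.End.mul_apply, hYT.eq,
    Module.End.mul_apply, h00, ← Module.End.mul_apply, ← hXT.eq, Module.End.mul_apply]

end GModel

theorem RingQuot.adjoin_range_mkAlgHom_ι {K ι : Type*} [CommRing K]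
    (r : FreeAlgebra K ι → FreeAlgebra K ι → Prop) :
    Algebra.adjoin K (Set.range fun i => RingQuot.mkAlgHom K r (FreeAlgebra.ι K i)) = ⊤ := by
  rw [Set.range_comp', ← AlgHom.map_adjoin, FreeAlgebra.adjoin_range_ι, Algebra.map_top,
    AlgHom.range_eq_top]
  exact RingQuot.mkAlgHom_surjective K r

namespace GRel

variable {K : Type*} [Field K] {p k ℓ : ℕ} {a : K}

local notation "x" => RingQuot.mkAlgHom K (GRel K p k ℓ a) (FreeAlgebra.ι K 0)
local notation "y" => RingQuot.mkAlgHom K (GRel K p k ℓ a) (FreeAlgebra.ι K 1)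

theorem adjoin_eq_top : Algebra.adjoin K {x, y} = ⊤ := by
  rw [← RingQuot.adjoin_range_mkAlgHom_ι (GRel K p k ℓ a)]
  congr 1
  ext
  simp [Fin.exists_fin_two, eq_comm]

theorem mk_comm : y * x = x * y - (1 / 2 : K) • x ^ 2 := by
  simpa only [map_mul, map_sub, map_smul, map_pow] using
    RingQuot.mkAlgHom_rel K (comm : GRel K p k ℓ a _ _)

theorem mk_ypk : y ^ p ^ k = a • x ^ p ^ k := by
  simpa only [map_smul, map_pow] using RingQuot.mkAlgHom_rel K (ypk : GRel K p k ℓ a _ _)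

theorem mk_xpl : x ^ p ^ ℓ = 0 := by
  simpa only [map_zero, map_pow] using RingQuot.mkAlgHom_rel K (xpl : GRel K p k ℓ a _ _)

variable [Fact p.Prime] [CharP K p]

noncomputable def toModel (hk : k ≠ 0) :
    RingQuot (GRel K p k ℓ a) →ₐ[K] Module.End K ((Fin (p ^ ℓ) × Fin (p ^ k)) →₀ K) :=
  RingQuot.liftAlgHom K ⟨FreeAlgebra.lift K ![GModel.opX K _ _, GModel.opY K _ _ a], by
    rintro _ _ (_ | _ | _) <;>
      simp [GModel.opY_mul_opX, GModel.opY_pow_eq _ _ p hk, GModel.opX_pow_eq_zero]⟩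

theorem linearIndependent_pow_mul_pow (hk : k ≠ 0) :
    LinearIndependent K fun q : Fin (p ^ ℓ) × Fin (p ^ k) =>
      x ^ (q.1 : ℕ) * y ^ (q.2 : ℕ) := by
  refine LinearIndependent.of_comp
    ((LinearMap.applyₗ (GModel.e K _ _ 0 0)).comp (toModel hk).toLinearMap) ?_
  convert (Finsupp.basisSingleOne :
    Module.Basis _ K ((Fin (p ^ ℓ) × Fin (p ^ k)) →₀ K)).linearIndependent
  ext1 q
  simp [toModel, GModel.opY_pow_e_zero K a q.2.isLt, GModel.opX_pow_e, GModel.single_one_eq_e]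

end GRel

theorem stmt17 (p : ℕ) [Fact p.Prime] (K : Type*) [Field K] [CharP K p]
    (k ℓ : ℕ) (hk : 1 ≤ k) (a : K) :
    (∃ b : Module.Basis (Fin (p ^ ℓ) × Fin (p ^ k)) K (RingQuot (GRel K p k ℓ a)),
      ∀ ij : Fin (p ^ ℓ) × Fin (p ^ k), b ij =
        (RingQuot.mkAlgHom K (GRel K p k ℓ a) (FreeAlgebra.ι K (0 : Fin 2))) ^ (ij.1 : ℕ) *
        (RingQuot.mkAlgHom K (GRel K p k ℓ a) (FreeAlgebra.ι K (1 : Fin 2))) ^ (ij.2 : ℕ)) ∧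
    Module.finrank K (RingQuot (GRel K p k ℓ a)) = p ^ (k + ℓ) := by
  have hli := GRel.linearIndependent_pow_mul_pow (K := K) (ℓ := ℓ) (a := a)
    (Nat.one_le_iff_ne_zero.mp hk)
  have hspan := span_pow_mul_pow_eq_top (pow_pos (Fact.out : p.Prime).pos k) a
    GRel.adjoin_eq_top GRel.mk_comm GRel.mk_ypk (GRel.mk_xpl (ℓ := ℓ))
  let b := Module.Basis.mk hli hspan.ge
  refine ⟨⟨b, fun ij => Module.Basis.mk_apply hli hspan.ge ij⟩, ?_⟩
  rw [Module.finrank_eq_card_basis b, Fintype.card_prod, Fintype.card_fin, Fintype.card_fin,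
    ← pow_add, add_comm]
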